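/- arXiv:1112.0791 — 3 statements merged into one kernel-verified Lean document; each statement's English description precedes it below -/
import Mathlib

section
/- For all ranked CO problems P and Q and every rank interval [i,j], P ≡^{s,[i,j]}_g Q if and only if: (1) Mod(P^g) = Mod(Q^g); (2) (>^P)_{Mod(P^g)} = (>^Q)_{Mod(Q^g)}; (3) for every I, J ∈ Mod(P^g) such that i < diff^P(I,J) or i < diff^Q(I,J), either diff^P(I,J) = diff^Q(I,J), or both diff^P(I,J) > j and diff^Q(I,J) > j; and (4) (>^{P_{<i}})_{Mod(P^g)} = (>^{Q_{<i}})_{Mod(Q^g)}. -/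
open scoped Classical

/-- Propositional formulas over a universe `U` of atoms, built from atoms,
`⊥`, conjunction, disjunction and implication. -/
inductive Formula (U : Type) : Type where
  | atom : U → Formula U
  | bot  : Formula U
  | conj : Formula U → Formula U → Formula U
  | disj : Formula U → Formula U → Formula U
  | imp  : Formula U → Formula U → Formula U

variable {U : Type}

/-- Classical satisfaction `I ⊨ φ`. -/
def Sat (I : Set U) : Formula U → Prop
  | .atom a => a ∈ I
  | .bot => False
  | .conj φ ψ => Sat I φ ∧ Sat I ψ
  | .disj φ ψ => Sat I φ ∨ Sat I ψ
  | .imp φ ψ => Sat I φ → Sat I ψ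

/-- Classical satisfaction of a theory. -/
def SatTheory (I : Set U) (T : Set (Formula U)) : Prop := ∀ φ ∈ T, Sat I φ

/-- `Mod T`: the classical models of a theory `T`. -/
def models (T : Set (Formula U)) : Set (Set U) := {I | SatTheory I T}

/-- HT-satisfaction `⟨I, J⟩ ⊨_HT φ` (for `I ⊆ J`). -/
def SatHT (I J : Set U) : Formula U → Prop
  | .atom a => a ∈ I
  | .bot => False
  | .conj φ ψ => SatHT I J φ ∧ SatHT I J ψ
  | .disj φ ψ => SatHT I J φ ∨ SatHT I J ψ
  | .imp φ ψ => Sat J (Formula.imp φ ψ) ∧ (¬ SatHT I J φ ∨ SatHT I J ψ)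

/-- HT-satisfaction of a theory. -/
def SatHTTheory (I J : Set U) (T : Set (Formula U)) : Prop := ∀ φ ∈ T, SatHT I J φ

/-- `HT T`: the set of HT-models `⟨I,J⟩` (with `I ⊆ J`) of a theory `T`. -/
def HTmod (T : Set (Formula U)) : Set (Set U × Set U) :=
  {p | p.1 ⊆ p.2 ∧ SatHTTheory p.1 p.2 T}

/-- `AS T`: the equilibrium models (answer sets) of a theory `T`. -/
def AS (T : Set (Formula U)) : Set (Set U) :=
  {I | SatHTTheory I I T ∧ ∀ J : Set U, J ⊂ I → ¬ SatHTTheory J I T}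

/-- A ranked preference rule `φ₁ > ⋯ > φₖ ←ʲ ψ` with nonempty head and rank `j ≥ 1`. -/
structure Rule (U : Type) : Type where
  head : List (Formula U)
  body : Formula U
  rank : ℕ
  head_ne : head ≠ []
  rank_pos : 1 ≤ rank

/-- Satisfaction degree `v_I(r)`: the least (1-based) index of a satisfied head formula
if `I` satisfies the body and some head formula; `1` otherwise. -/
noncomputable def degree (I : Set U) (r : Rule U) : ℕ :=
  if Sat I r.body ∧ ∃ φ ∈ r.head, Sat I φ then
    sInf {n : ℕ | ∃ k : Fin r.head.length, n = k.1 + 1 ∧ Sat I (r.head.get k)}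
  else 1

/-- The strict preference `I >^S J` induced by a selector `S`. -/
def gtSel (S : Set (Rule U)) (I J : Set U) : Prop :=
  ∃ r' ∈ S, degree I r' < degree J r' ∧
    (∀ r ∈ S, r.rank = r'.rank → degree I r ≤ degree J r) ∧
    (∀ r ∈ S, r.rank < r'.rank → degree I r = degree J r)

/-- The indifference `I ≈^S J` induced by a selector `S`. -/
def simSel (S : Set (Rule U)) (I J : Set U) : Prop :=
  ∀ r ∈ S, degree I r = degree J r

/-- The preference `I ≥^S J` induced by a selector `S`. -/
def geSel (S : Set (Rule U)) (I J : Set U) : Prop :=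
  simSel S I J ∨ gtSel S I J

/-- An optimization problem: a generator theory plus a finite selector. -/
structure OptProblem (U : Type) : Type where
  gen : Set (Formula U)
  sel : Set (Rule U)
  sel_finite : sel.Finite

/-- Union of optimization problems. -/
def OptProblem.union (P Q : OptProblem U) : OptProblem U :=
  ⟨P.gen ∪ Q.gen, P.sel ∪ Q.sel, P.sel_finite.union Q.sel_finite⟩

/-- `P_{<i}`: the restriction of `P` to preference rules of rank `< i`. -/
def OptProblem.below (P : OptProblem U) (i : ℕ) : OptProblem U :=
  ⟨P.gen, {r ∈ P.sel | r.rank < i}, P.sel_finite.subset (Set.sep_subset _ _)⟩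

/-- The two semantics for generators: classical (CO problems) and
equilibrium-model/answer-set (ASO problems). -/
inductive Sem : Type where
  | co : Sem
  | aso : Sem

/-- `μ(P)`: the outcomes of `P` under the chosen semantics. -/
def outcomes (sem : Sem) (P : OptProblem U) : Set (Set U) :=
  match sem with
  | Sem.co => models P.gen
  | Sem.aso => AS P.gen

/-- `π(P)`: the preferred (optimal) outcomes of `P`. -/
def pref (sem : Sem) (P : OptProblem U) : Set (Set U) :=
  {I | I ∈ outcomes sem P ∧ ¬ ∃ J ∈ outcomes sem P, gtSel P.sel J I}

/-- `diff^P(I,J)`: the largest `k` with `I ≈^{P_{<k}} J` (`∞` if this holds for all `k`). -/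
noncomputable def diff (P : OptProblem U) (I J : Set U) : ℕ∞ :=
  if ∀ k : ℕ, simSel (P.below k).sel I J then ⊤
  else ((sSup {k : ℕ | simSel (P.below k).sel I J} : ℕ) : ℕ∞)

/-- Restriction `≻_V` of a relation on interpretations to a set `V` of interpretations. -/
def restrictRel (rel : Set U → Set U → Prop) (V : Set (Set U)) : Set U → Set U → Prop :=
  fun A B => rel A B ∧ A ∈ V ∧ B ∈ V

/-- All rules of `S` have rank in the interval `[i,j]` (`j` may be `∞`). -/
def inRankInterval (i : ℕ) (j : ℕ∞) (S : Set (Rule U)) : Prop :=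
  ∀ r ∈ S, i ≤ r.rank ∧ (r.rank : ℕ∞) ≤ j

/-- Strong sel-equivalence `P ≡^{s,[i,j]} Q`: same preferred outcomes under addition of any
context from `L^{s,[i,j]}` (empty generator, selector with ranks in `[i,j]`). -/
def seqv (sem : Sem) (i : ℕ) (j : ℕ∞) (P Q : OptProblem U) : Prop :=
  ∀ R : OptProblem U, R.gen = ∅ → inRankInterval i j R.sel →
    pref sem (P.union R) = pref sem (Q.union R)

/-- Strong gen-equivalence `P ≡_g Q`: same preferred outcomes under addition of any
generator context from `L^g` (empty selector). -/
def geqv (sem : Sem) (P Q : OptProblem U) : Prop :=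
  ∀ R : OptProblem U, R.sel = ∅ →
    pref sem (P.union R) = pref sem (Q.union R)

/-- Strong (combined) equivalence `P ≡^{s,[i,j]}_g Q`: same preferred outcomes under addition
of any context from `L^{[i,j]}` (arbitrary generator, selector with ranks in `[i,j]`). -/
def sgeqv (sem : Sem) (i : ℕ) (j : ℕ∞) (P Q : OptProblem U) : Prop :=
  ∀ R : OptProblem U, inRankInterval i j R.sel →
    pref sem (P.union R) = pref sem (Q.union R)

section Stmt11Aux

variable {U : Type}

/-! ### Basic combinatorics of degrees, beats and `diff` -/

def EqBelow (S : Set (Rule U)) (k : ℕ) (I J : Set U) : Prop :=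
  ∀ r ∈ S, r.rank < k → degree I r = degree J r

def LeAt (S : Set (Rule U)) (d : ℕ) (I J : Set U) : Prop :=
  ∀ r ∈ S, r.rank = d → degree I r ≤ degree J r

def StrictAt (S : Set (Rule U)) (d : ℕ) (I J : Set U) : Prop :=
  ∃ r ∈ S, r.rank = d ∧ degree I r < degree J r

def Beat (S : Set (Rule U)) (d : ℕ) (I J : Set U) : Prop :=
  EqBelow S d I J ∧ LeAt S d I J ∧ StrictAt S d I J

lemma EqBelow.mono {S : Set (Rule U)} {k k' : ℕ} {I J : Set U}
    (h : EqBelow S k I J) (hk : k' ≤ k) : EqBelow S k' I J :=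
  fun r hr hrk => h r hr (lt_of_lt_of_le hrk hk)

lemma eqBelow_union {S T : Set (Rule U)} {k : ℕ} {I J : Set U} :
    EqBelow (S ∪ T) k I J ↔ EqBelow S k I J ∧ EqBelow T k I J := by
  constructor
  · exact fun h => ⟨fun r hr => h r (Or.inl hr), fun r hr => h r (Or.inr hr)⟩
  · rintro ⟨h1, h2⟩ r (hr | hr) hk
    · exact h1 r hr hk
    · exact h2 r hr hk

lemma gtSel_iff_beat {S : Set (Rule U)} {I J : Set U} :
    gtSel S I J ↔ ∃ d, Beat S d I J := by
  constructor
  · rintro ⟨r', hr', hlt, hsame, hlow⟩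
    exact ⟨r'.rank, hlow, hsame, r', hr', rfl, hlt⟩
  · rintro ⟨d, hE, hL, r', hr', hrank, hlt⟩
    refine ⟨r', hr', hlt, ?_, ?_⟩
    · intro r hr hrk; exact hL r hr (hrk.trans hrank)
    · intro r hr hrk; exact hE r hr (hrank ▸ hrk)

lemma gtSel_irrefl {S : Set (Rule U)} {I : Set U} : ¬ gtSel S I I := by
  rintro ⟨r', _, hlt, -, -⟩; exact lt_irrefl _ hlt

lemma simSel_below_iff {P : OptProblem U} {k : ℕ} {I J : Set U} :
    simSel (P.below k).sel I J ↔ EqBelow P.sel k I J := by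
  constructor
  · intro h r hr hrk; exact h r ⟨hr, hrk⟩
  · rintro h r ⟨hr, hrk⟩; exact h r hr hrk

lemma le_diff_iff {P : OptProblem U} {I J : Set U} (k : ℕ) :
    (k : ℕ∞) ≤ diff P I J ↔ EqBelow P.sel k I J := by
  unfold diff
  split_ifs with h
  · simp only [le_top, true_iff]
    exact simSel_below_iff.mp (h k)
  · rw [Nat.cast_le]
    push_neg at h
    obtain ⟨k0, hk0⟩ := h
    have hk0' : ¬ EqBelow P.sel k0 I J := fun hc => hk0 (simSel_below_iff.mpr hc)
    set T : Set ℕ := {k | simSel (P.below k).sel I J} with hT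
    have hTmem : ∀ k, k ∈ T ↔ EqBelow P.sel k I J := fun k => simSel_below_iff
    have hne : T.Nonempty := ⟨0, (hTmem 0).mpr (fun r _ hr => absurd hr (Nat.not_lt_zero _))⟩
    have hbdd : BddAbove T := by
      refine ⟨k0, fun k hk => ?_⟩
      by_contra hkk
      exact hk0' (((hTmem k).mp hk).mono (le_of_not_ge hkk))
    have hmem : sSup T ∈ T := Nat.sSup_mem hne hbdd
    constructor
    · intro hk
      exact ((hTmem _).mp hmem).mono hk
    · intro hk
      exact le_csSup hbdd ((hTmem k).mpr hk)

lemma lt_diff_iff {P : OptProblem U} {I J : Set U} (k : ℕ) :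
    (k : ℕ∞) < diff P I J ↔ EqBelow P.sel (k + 1) I J := by
  rw [← le_diff_iff (k + 1), Nat.cast_add, Nat.cast_one,
    ENat.add_one_le_iff (by simp : (k : ℕ∞) ≠ ⊤)]

lemma beat_diff {P : OptProblem U} {I J : Set U} {d : ℕ}
    (h : Beat P.sel d I J) : diff P I J = (d : ℕ∞) := by
  obtain ⟨hE, hL, r0, hr0, hrank, hlt⟩ := h
  refine le_antisymm ?_ ((le_diff_iff d).mpr hE)
  by_contra hc
  push_neg at hc
  have := (lt_diff_iff d).mp hc r0 hr0 (by omega)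
  exact hlt.ne this

lemma diff_exists_ne {P : OptProblem U} {I J : Set U} {d : ℕ}
    (h : diff P I J = (d : ℕ∞)) :
    ∃ r ∈ P.sel, r.rank = d ∧ degree I r ≠ degree J r := by
  have h1 : EqBelow P.sel d I J := (le_diff_iff d).mp h.ge
  have h2 : ¬ EqBelow P.sel (d + 1) I J := by
    intro hc
    have := (lt_diff_iff d).mpr hc
    rw [h] at this
    exact lt_irrefl _ this
  unfold EqBelow at h2
  push_neg at h2
  obtain ⟨r, hr, hrk, hne⟩ := h2
  have : r.rank = d := by
    by_contra hne'
    exact hne (h1 r hr (by omega))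
  exact ⟨r, hr, this, hne⟩

lemma eqBelow_symm {S : Set (Rule U)} {k : ℕ} {I J : Set U}
    (h : EqBelow S k I J) : EqBelow S k J I := fun r hr hk => (h r hr hk).symm

lemma enat_le_of_nat_le {a b : ℕ∞} (h : ∀ k : ℕ, (k : ℕ∞) ≤ a → (k : ℕ∞) ≤ b) : a ≤ b := by
  by_contra hab
  push_neg at hab
  have hb : b ≠ ⊤ := (lt_top_iff_ne_top.mp (hab.trans_le le_top))
  lift b to ℕ using hb with n
  have h1 : ((n : ℕ∞) + 1) ≤ a := (ENat.add_one_le_iff (by simp)).mpr hab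
  have h2 := h (n + 1) (by push_cast; exact h1)
  have h3 : n + 1 ≤ n := by exact_mod_cast h2
  omega

lemma diff_comm {P : OptProblem U} {I J : Set U} : diff P I J = diff P J I := by
  refine le_antisymm (enat_le_of_nat_le fun k hk => ?_) (enat_le_of_nat_le fun k hk => ?_) <;>
    exact (le_diff_iff k).mpr (eqBelow_symm ((le_diff_iff k).mp hk))

end Stmt11Aux
section Stmt11Aux2

variable {U : Type}

/-! ### Generator contexts: theories with prescribed models -/

lemma models_union {T₁ T₂ : Set (Formula U)} :
    models (T₁ ∪ T₂) = models T₁ ∩ models T₂ := by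
  ext M
  constructor
  · exact fun h => ⟨fun φ hφ => h φ (Or.inl hφ), fun φ hφ => h φ (Or.inr hφ)⟩
  · rintro ⟨h1, h2⟩ φ (hφ | hφ)
    · exact h1 φ hφ
    · exact h2 φ hφ

def pairTheory (A B : Set U) : Set (Formula U) := {φ | Sat A φ ∧ Sat B φ}

lemma pairTheory_comm {A B : Set U} : pairTheory A B = pairTheory B A := by
  ext φ; exact and_comm

lemma mem_models_pairTheory_of_ne {A B M : Set U} {a0 : U}
    (ha : a0 ∈ A) (hb : a0 ∉ B) (hM : M ∈ models (pairTheory A B)) :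
    M = A ∨ M = B := by
  by_cases h0 : a0 ∈ M
  · left
    ext a
    constructor
    · intro haM
      by_contra haA
      have hφ : Formula.imp (.atom a) (.imp (.atom a0) .bot) ∈ pairTheory A B := by
        constructor
        · intro h; exact absurd h haA
        · intro _ h; exact hb h
      exact hM _ hφ haM h0
    · intro haA
      have hφ : Formula.disj (.imp (.atom a0) .bot) (.atom a) ∈ pairTheory A B := by
        constructor
        · exact Or.inr haA
        · exact Or.inl (fun h => hb h)
      rcases hM _ hφ with h | h
      · exact absurd h0 h
      · exact h
  · right
    ext a
    constructor
    · intro haM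
      by_contra haB
      have hφ : Formula.imp (.atom a) (.atom a0) ∈ pairTheory A B := by
        constructor
        · intro _; exact ha
        · intro h; exact absurd h haB
      exact h0 (hM _ hφ haM)
    · intro haB
      have hφ : Formula.disj (.atom a0) (.atom a) ∈ pairTheory A B := by
        constructor
        · exact Or.inl ha
        · exact Or.inr haB
      rcases hM _ hφ with h | h
      · exact absurd h h0
      · exact h

lemma models_pairTheory {A B : Set U} :
    models (pairTheory A B) = {A, B} := by
  ext M
  constructor
  · intro hM
    by_cases hAB : A = B
    · subst hAB
      left
      ext a
      constructor
      · intro haM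
        by_contra haA
        exact hM (Formula.imp (.atom a) .bot) ⟨fun h => haA h, fun h => haA h⟩ haM
      · intro haA
        exact hM (.atom a) ⟨haA, haA⟩
    · have : ∃ a0, (a0 ∈ A ∧ a0 ∉ B) ∨ (a0 ∈ B ∧ a0 ∉ A) := by
        by_contra hc
        push_neg at hc
        apply hAB
        ext a
        have := hc a
        tauto
      obtain ⟨a0, ⟨ha, hb⟩ | ⟨ha, hb⟩⟩ := this
      · exact mem_models_pairTheory_of_ne ha hb hM
      · rcases mem_models_pairTheory_of_ne ha hb (pairTheory_comm ▸ hM) with h | h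
        · exact Or.inr h
        · exact Or.inl h
  · rintro (rfl | rfl)
    · exact fun φ hφ => hφ.1
    · exact fun φ hφ => hφ.2

/-! ### Test rules -/

def testRule (φ : Formula U) (d : ℕ) (hd : 1 ≤ d) : Rule U :=
  ⟨[φ, Formula.imp φ .bot], Formula.imp .bot .bot, d, by simp, hd⟩

@[simp] lemma testRule_rank (φ : Formula U) (d : ℕ) (hd : 1 ≤ d) :
    (testRule φ d hd).rank = d := rfl

lemma degree_testRule (I : Set U) (φ : Formula U) (d : ℕ) (hd : 1 ≤ d) :
    degree I (testRule φ d hd) = if Sat I φ then 1 else 2 := by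
  have hbody : Sat I (Formula.imp .bot .bot) := fun h => h
  have hhead : ∃ ψ ∈ (testRule φ d hd).head, Sat I ψ := by
    by_cases h : Sat I φ
    · exact ⟨φ, by simp [testRule], h⟩
    · exact ⟨Formula.imp φ .bot, by simp [testRule], fun hc => h hc⟩
  rw [degree, if_pos ⟨hbody, hhead⟩]
  by_cases h : Sat I φ
  · rw [if_pos h]
    have h1 : (1 : ℕ) ∈ {n : ℕ | ∃ k : Fin (testRule φ d hd).head.length,
        n = k.1 + 1 ∧ Sat I ((testRule φ d hd).head.get k)} :=
      ⟨⟨0, by simp [testRule]⟩, rfl, h⟩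
    refine le_antisymm (Nat.sInf_le h1) ?_
    obtain ⟨k, hk, -⟩ := Nat.sInf_mem ⟨1, h1⟩
    omega
  · rw [if_neg h]
    have h2 : (2 : ℕ) ∈ {n : ℕ | ∃ k : Fin (testRule φ d hd).head.length,
        n = k.1 + 1 ∧ Sat I ((testRule φ d hd).head.get k)} := by
      refine ⟨⟨1, by simp [testRule]⟩, rfl, ?_⟩
      exact fun hc => h hc
    refine le_antisymm (Nat.sInf_le h2) ?_
    obtain ⟨k, hk, hsat⟩ := Nat.sInf_mem ⟨2, h2⟩
    have hlen : (testRule φ d hd).head.length = 2 := by simp [testRule]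
    have hk2 : k.1 < 2 := hlen ▸ k.2
    interval_cases hkv : k.1
    · exfalso
      apply h
      have : (testRule φ d hd).head.get k = φ := by
        have : k = ⟨0, by omega⟩ := Fin.ext hkv
        rw [this]; rfl
      rwa [this] at hsat
    · omega

end Stmt11Aux2
section Stmt11Aux3

variable {U : Type}

/-! ### Preferred outcomes of unions with contexts -/

lemma mem_pref_union {P R : OptProblem U} {I : Set U} :
    I ∈ pref Sem.co (P.union R) ↔
      (I ∈ models P.gen ∧ I ∈ models R.gen) ∧
      ¬ ∃ J, (J ∈ models P.gen ∧ J ∈ models R.gen) ∧ gtSel (P.sel ∪ R.sel) J I := by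
  have hout : outcomes Sem.co (P.union R) = models P.gen ∩ models R.gen := models_union
  constructor
  · rintro ⟨h1, h2⟩
    rw [hout] at h1
    refine ⟨h1, fun ⟨J, hJ, hg⟩ => h2 ⟨J, ?_, hg⟩⟩
    rw [hout]; exact hJ
  · rintro ⟨h1, h2⟩
    refine ⟨by rw [hout]; exact h1, fun ⟨J, hJ, hg⟩ => h2 ⟨J, ?_, hg⟩⟩
    rw [hout] at hJ; exact hJ

/-- The generator-only context with theory `T`. -/
def genCtx (T : Set (Formula U)) : OptProblem U := ⟨T, ∅, Set.finite_empty⟩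

/-- A context with theory `T` and a single preference rule `r`. -/
def ruleCtx (T : Set (Formula U)) (r : Rule U) : OptProblem U := ⟨T, {r}, Set.finite_singleton r⟩

@[simp] lemma genCtx_gen (T : Set (Formula U)) : (genCtx T).gen = T := rfl
@[simp] lemma genCtx_sel (T : Set (Formula U)) : (genCtx T).sel = ∅ := rfl
@[simp] lemma ruleCtx_gen (T : Set (Formula U)) (r : Rule U) : (ruleCtx T r).gen = T := rfl
@[simp] lemma ruleCtx_sel (T : Set (Formula U)) (r : Rule U) : (ruleCtx T r).sel = {r} := rfl

lemma mem_pref_pairCtx {P : OptProblem U} {S₀ : Set (Rule U)} {hS₀ : S₀.Finite}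
    {A B : Set U} (hA : A ∈ models P.gen) (hB : B ∈ models P.gen) :
    B ∈ pref Sem.co (P.union ⟨pairTheory A B, S₀, hS₀⟩) ↔ ¬ gtSel (P.sel ∪ S₀) A B := by
  rw [mem_pref_union]
  have hmp : models (pairTheory A B) = ({A, B} : Set (Set U)) := models_pairTheory
  constructor
  · rintro ⟨-, h⟩ hg
    exact h ⟨A, ⟨hA, by rw [hmp]; exact Or.inl rfl⟩, hg⟩
  · intro hg
    refine ⟨⟨hB, by rw [hmp]; exact Or.inr rfl⟩, ?_⟩
    rintro ⟨J, ⟨hJ1, hJ2⟩, hgt⟩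
    rw [hmp] at hJ2
    rcases hJ2 with rfl | rfl
    · exact hg hgt
    · exact gtSel_irrefl hgt

/-! ### Deriving condition (1): equality of models -/

lemma mem_pref_genCtx_self {P : OptProblem U} {I : Set U} :
    I ∈ pref Sem.co (P.union (genCtx (pairTheory I I))) ↔ I ∈ models P.gen := by
  rw [mem_pref_union]
  simp only [genCtx_gen, genCtx_sel]
  have hmp : models (pairTheory I I) = ({I, I} : Set (Set U)) := models_pairTheory
  constructor
  · rintro ⟨⟨h1, -⟩, -⟩; exact h1
  · intro h1
    refine ⟨⟨h1, by rw [hmp]; exact Or.inl rfl⟩, ?_⟩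
    rintro ⟨J, ⟨-, hJ2⟩, hgt⟩
    rw [hmp] at hJ2
    rcases hJ2 with rfl | rfl <;> exact gtSel_irrefl hgt

lemma models_eq_of_sgeqv {P Q : OptProblem U} {i : ℕ} {j : ℕ∞}
    (h : sgeqv Sem.co i j P Q) : models P.gen = models Q.gen := by
  ext I
  have hR : inRankInterval i j (genCtx (pairTheory I I) : OptProblem U).sel := by
    rintro r ⟨⟩
  have h' := h _ hR
  rw [← mem_pref_genCtx_self (P := P), ← mem_pref_genCtx_self (P := Q), h']

end Stmt11Aux3
section Stmt11Aux4

variable {U : Type}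

lemma sgeqv_symm {sem : Sem} {i : ℕ} {j : ℕ∞} {P Q : OptProblem U}
    (h : sgeqv sem i j P Q) : sgeqv sem i j Q P :=
  fun R hR => (h R hR).symm

lemma exists_sep_of_ne {A B : Set U} (h : A ≠ B) :
    ∃ ψ : Formula U, Sat B ψ ∧ ¬ Sat A ψ := by
  have hex : ∃ a0, (a0 ∈ A ∧ a0 ∉ B) ∨ (a0 ∈ B ∧ a0 ∉ A) := by
    by_contra hc
    push_neg at hc
    apply h
    ext a
    have := hc a
    tauto
  obtain ⟨a0, ⟨ha, hb⟩ | ⟨ha, hb⟩⟩ := hex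
  · exact ⟨Formula.imp (.atom a0) .bot, fun hc => hb hc, fun hc => hc ha⟩
  · exact ⟨Formula.atom a0, ha, hb⟩

/-- Condition (2), pointwise. -/
lemma gtSel_iff_of_sgeqv {P Q : OptProblem U} {i : ℕ} {j : ℕ∞}
    (h : sgeqv Sem.co i j P Q) (hM : models P.gen = models Q.gen)
    {A B : Set U} (hA : A ∈ models P.gen) (hB : B ∈ models P.gen) :
    gtSel P.sel A B ↔ gtSel Q.sel A B := by
  have hA' : A ∈ models Q.gen := hM ▸ hA
  have hB' : B ∈ models Q.gen := hM ▸ hB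
  have hR : inRankInterval i j
      (⟨pairTheory A B, ∅, Set.finite_empty⟩ : OptProblem U).sel := by
    rintro r ⟨⟩
  have h' := h _ hR
  have e1 := mem_pref_pairCtx (P := P) (S₀ := ∅) (hS₀ := Set.finite_empty) hA hB
  have e2 := mem_pref_pairCtx (P := Q) (S₀ := ∅) (hS₀ := Set.finite_empty) hA' hB'
  rw [Set.union_empty] at e1 e2
  rw [h', e2] at e1
  exact not_iff_not.mp e1.symm

/-- A single rule of rank `m` strictly favouring `A` blocks all strict preference
of `B` over `A` at ranks `≥ m`. -/
lemma gtSel_union_block {P : OptProblem U} {r : Rule U} {m : ℕ} (hm : r.rank = m)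
    {A B : Set U} (hfav : degree A r < degree B r) :
    gtSel (P.sel ∪ {r}) B A ↔ gtSel (P.below m).sel B A := by
  rw [gtSel_iff_beat, gtSel_iff_beat]
  constructor
  · rintro ⟨e, hE, hL, r1, hr1, hrank, hlt⟩
    have hr1P : r1 ∈ P.sel := by
      rcases hr1 with h1 | rfl
      · exact h1
      · exact absurd hlt (not_lt.mpr hfav.le)
    have hem : e < m := by
      rcases lt_trichotomy e m with h1 | h1 | h1
      · exact h1
      · exact absurd (hL r (Or.inr rfl) (hm.trans h1.symm)) (not_le.mpr hfav)
      · exact absurd (hE r (Or.inr rfl) (by omega)) hfav.ne'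
    refine ⟨e, ?_, ?_, r1, ⟨hr1P, by omega⟩, hrank, hlt⟩
    · rintro r2 ⟨hr2, -⟩ hk
      exact hE r2 (Or.inl hr2) hk
    · rintro r2 ⟨hr2, -⟩ hk
      exact hL r2 (Or.inl hr2) hk
  · rintro ⟨e, hE, hL, r1, ⟨hr1, hr1m⟩, hrank, hlt⟩
    have hem : e < m := by omega
    refine ⟨e, ?_, ?_, r1, Or.inl hr1, hrank, hlt⟩
    · rintro r2 (h2 | rfl) hk
      · exact hE r2 ⟨h2, by omega⟩ hk
      · rw [hm] at hk; omega
    · rintro r2 (h2 | rfl) hk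
      · exact hL r2 ⟨h2, by omega⟩ hk
      · rw [hm] at hk; omega

lemma gtSel_union_of_lt_diff {Q : OptProblem U} {r : Rule U} {m : ℕ} (hm : r.rank = m)
    {A B : Set U} (hfav : degree A r < degree B r) (h : (m : ℕ∞) < diff Q A B) :
    gtSel (Q.sel ∪ {r}) A B := by
  have hE : EqBelow Q.sel (m + 1) A B := (lt_diff_iff m).mp h
  rw [gtSel_iff_beat]
  refine ⟨m, ?_, ?_, r, Or.inr rfl, hm, hfav⟩
  · rintro r2 (h2 | rfl) hk
    · exact hE r2 h2 (by omega)
    · rw [hm] at hk; omega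
  · rintro r2 (h2 | rfl) hk
    · exact le_of_eq (hE r2 h2 (by omega))
    · exact hfav.le

lemma not_gtSel_below_of_lt_diff {Q : OptProblem U} {m : ℕ} {A B : Set U}
    (h : (m : ℕ∞) < diff Q A B) : ¬ gtSel (Q.below m).sel B A := by
  have hE : EqBelow Q.sel (m + 1) A B := (lt_diff_iff m).mp h
  rw [gtSel_iff_beat]
  rintro ⟨e, -, -, r1, ⟨hr1, hr1m⟩, hrank, hlt⟩
  exact hlt.ne (hE r1 hr1 (by omega)).symm

lemma forced_LeAt {P : OptProblem U} {r : Rule U} {m d : ℕ} (hm : r.rank = m) (hdm : d ≤ m)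
    {A B : Set U} (hdiff : diff P A B = (d : ℕ∞)) (hfav : degree A r < degree B r)
    (hg : gtSel (P.sel ∪ {r}) A B) : LeAt P.sel d A B := by
  obtain ⟨r0, hr0, hr0rank, hr0ne⟩ := diff_exists_ne hdiff
  have hEd : EqBelow P.sel d A B := (le_diff_iff d).mp hdiff.ge
  rw [gtSel_iff_beat] at hg
  obtain ⟨e, hE, hL, r1, hr1, hrank, hlt⟩ := hg
  have hed : e ≤ d := by
    by_contra hc
    exact hr0ne (hE r0 (Or.inl hr0) (by omega))
  have hede : e = d := by
    rcases hr1 with h1 | rfl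
    · by_contra hne
      exact hlt.ne (hEd r1 h1 (by omega))
    · omega
  intro r2 hr2 hr2d
  exact hL r2 (Or.inl hr2) (by omega)

/-- Condition (4), pointwise. -/
lemma gtSel_below_iff_of_sgeqv {P Q : OptProblem U} {i : ℕ} {j : ℕ∞}
    (h : sgeqv Sem.co i j P Q) (hM : models P.gen = models Q.gen)
    (hi : 1 ≤ i) (hij : (i : ℕ∞) ≤ j)
    {A B : Set U} (hA : A ∈ models P.gen) (hB : B ∈ models P.gen) :
    gtSel (P.below i).sel A B ↔ gtSel (Q.below i).sel A B := by
  by_cases hAB : A = B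
  · subst hAB
    exact iff_of_false gtSel_irrefl gtSel_irrefl
  · obtain ⟨ψ, hψB, hψA⟩ := exists_sep_of_ne hAB
    set r := testRule ψ i hi with hr
    have hdA : degree A r = 2 := by rw [hr, degree_testRule, if_neg hψA]
    have hdB : degree B r = 1 := by rw [hr, degree_testRule, if_pos hψB]
    have hfav : degree B r < degree A r := by omega
    have hR : inRankInterval i j
        (⟨pairTheory A B, {r}, Set.finite_singleton r⟩ : OptProblem U).sel := by
      rintro r2 rfl
      exact ⟨le_rfl, hij⟩
    have h' := h _ hR
    have e1 := mem_pref_pairCtx (P := P) (S₀ := {r}) (hS₀ := Set.finite_singleton r) hA hB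
    have e2 := mem_pref_pairCtx (P := Q) (S₀ := {r}) (hS₀ := Set.finite_singleton r)
      (hM ▸ hA) (hM ▸ hB)
    rw [h', e2] at e1
    rw [gtSel_union_block (P := Q) rfl hfav, gtSel_union_block (P := P) rfl hfav] at e1
    exact not_iff_not.mp e1.symm

/-- Core contradiction for condition (3). -/
lemma diff_contra_of_sgeqv {P Q : OptProblem U} {i : ℕ} {j : ℕ∞}
    (h : sgeqv Sem.co i j P Q) (hM : models P.gen = models Q.gen)
    (hi : 1 ≤ i) (hij : (i : ℕ∞) ≤ j)
    {A B : Set U} (hA : A ∈ models P.gen) (hB : B ∈ models P.gen)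
    {d : ℕ} (hdP : diff P A B = (d : ℕ∞)) (hlt : (d : ℕ∞) < diff Q A B)
    (hdj : (d : ℕ∞) ≤ j)
    (hiOr : (i : ℕ∞) < diff P A B ∨ (i : ℕ∞) < diff Q A B) : False := by
  obtain ⟨r0, hr0, hr0rank, hr0ne⟩ := diff_exists_ne hdP
  have hABne : A ≠ B := by rintro rfl; exact hr0ne rfl
  set m := max i d with hm
  have him : i ≤ m := le_max_left _ _
  have hdm : d ≤ m := le_max_right _ _
  have hmcases : m = i ∨ m = d := by
    rcases le_total i d with h1 | h1
    · exact Or.inr (max_eq_right h1)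
    · exact Or.inl (max_eq_left h1)
  have hmj : (m : ℕ∞) ≤ j := by
    rcases hmcases with h1 | h1 <;> rw [h1]
    · exact hij
    · exact hdj
  have hiQ : (i : ℕ∞) < diff Q A B := by
    rcases hiOr with h1 | h1
    · rw [hdP] at h1
      exact h1.trans hlt
    · exact h1
  have hmQ : (m : ℕ∞) < diff Q A B := by
    rcases hmcases with h1 | h1 <;> rw [h1]
    · exact hiQ
    · exact hlt
  have h1m : 1 ≤ m := le_trans hi him
  obtain ⟨ψ1, hψ1A, hψ1B⟩ := exists_sep_of_ne (Ne.symm hABne)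
  obtain ⟨ψ2, hψ2B, hψ2A⟩ := exists_sep_of_ne hABne
  -- rule favouring A at rank m
  set r1 := testRule ψ1 m h1m with hr1
  have hd1 : degree A r1 < degree B r1 := by
    rw [hr1, degree_testRule, degree_testRule, if_pos hψ1A, if_neg hψ1B]
    omega
  have hq1 : gtSel (Q.sel ∪ {r1}) A B := gtSel_union_of_lt_diff rfl hd1 hmQ
  have hR1 : inRankInterval i j
      (⟨pairTheory A B, {r1}, Set.finite_singleton r1⟩ : OptProblem U).sel := by
    rintro r2 rfl
    exact ⟨him, hmj⟩
  have h1' := h _ hR1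
  have e1 := mem_pref_pairCtx (P := P) (S₀ := {r1}) (hS₀ := Set.finite_singleton r1) hA hB
  have e2 := mem_pref_pairCtx (P := Q) (S₀ := {r1}) (hS₀ := Set.finite_singleton r1)
    (hM ▸ hA) (hM ▸ hB)
  rw [h1', e2] at e1
  have hp1 : gtSel (P.sel ∪ {r1}) A B := by
    by_contra hc
    exact e1.mpr hc hq1
  have hLe1 : LeAt P.sel d A B := forced_LeAt rfl hdm hdP hd1 hp1
  -- rule favouring B at rank m, pair (B, A)
  set r2 := testRule ψ2 m h1m with hr2
  have hd2 : degree B r2 < degree A r2 := by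
    rw [hr2, degree_testRule, degree_testRule, if_pos hψ2B, if_neg hψ2A]
    omega
  have hdP' : diff P B A = (d : ℕ∞) := by rw [← diff_comm]; exact hdP
  have hmQ' : (m : ℕ∞) < diff Q B A := by rw [← diff_comm]; exact hmQ
  have hq2 : gtSel (Q.sel ∪ {r2}) B A := gtSel_union_of_lt_diff rfl hd2 hmQ'
  have hR2 : inRankInterval i j
      (⟨pairTheory B A, {r2}, Set.finite_singleton r2⟩ : OptProblem U).sel := by
    rintro r3 rfl
    exact ⟨him, hmj⟩
  have h2' := h _ hR2
  have e1' := mem_pref_pairCtx (P := P) (S₀ := {r2}) (hS₀ := Set.finite_singleton r2) hB hA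
  have e2' := mem_pref_pairCtx (P := Q) (S₀ := {r2}) (hS₀ := Set.finite_singleton r2)
    (hM ▸ hB) (hM ▸ hA)
  rw [h2', e2'] at e1'
  have hp2 : gtSel (P.sel ∪ {r2}) B A := by
    by_contra hc
    exact e1'.mpr hc hq2
  have hLe2 : LeAt P.sel d B A := forced_LeAt rfl hdm hdP' hd2 hp2
  exact hr0ne (le_antisymm (hLe1 r0 hr0 hr0rank) (hLe2 r0 hr0 hr0rank))

end Stmt11Aux4
section Stmt11Aux5

variable {U : Type}

/-- Transfer of strict preference in unions, given conditions (2)–(4). -/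
lemma gtSel_union_transfer {P Q : OptProblem U} {i : ℕ} {j : ℕ∞}
    (hi : 1 ≤ i) (hij : (i : ℕ∞) ≤ j)
    (h2 : ∀ A B : Set U, A ∈ models P.gen → B ∈ models P.gen →
      (gtSel P.sel A B ↔ gtSel Q.sel A B))
    (h3 : ∀ A B : Set U, A ∈ models P.gen → B ∈ models P.gen →
      ((i : ℕ∞) < diff P A B ∨ (i : ℕ∞) < diff Q A B) →
      (diff P A B = diff Q A B ∨ (j < diff P A B ∧ j < diff Q A B)))
    (h4 : ∀ A B : Set U, A ∈ models P.gen → B ∈ models P.gen →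
      (gtSel (P.below i).sel A B ↔ gtSel (Q.below i).sel A B))
    {S : Set (Rule U)} (hS : inRankInterval i j S)
    {A B : Set U} (hA : A ∈ models P.gen) (hB : B ∈ models P.gen)
    (hg : gtSel (P.sel ∪ S) A B) : gtSel (Q.sel ∪ S) A B := by
  rw [gtSel_iff_beat] at hg
  obtain ⟨d, hE, hL, hStr⟩ := hg
  have hEP : EqBelow P.sel d A B := (eqBelow_union.mp hE).1
  have hES : EqBelow S d A B := (eqBelow_union.mp hE).2
  have hLP : LeAt P.sel d A B := fun r hr => hL r (Or.inl hr)
  have hLS : LeAt S d A B := fun r hr => hL r (Or.inr hr)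
  rcases lt_or_ge d i with hd | hd
  · -- Case d < i : everything happens below rank i
    have hSP : StrictAt P.sel d A B := by
      obtain ⟨r1, hr1, hrank, hlt⟩ := hStr
      rcases hr1 with h1 | h1
      · exact ⟨r1, h1, hrank, hlt⟩
      · exact absurd (hS r1 h1).1 (by omega)
    have hPbelow : gtSel (P.below i).sel A B := by
      rw [gtSel_iff_beat]
      obtain ⟨r1, hr1, hrank, hlt⟩ := hSP
      exact ⟨d, fun r2 hr2 hk => hEP r2 hr2.1 hk,
        fun r2 hr2 hk => hLP r2 hr2.1 hk, r1, ⟨hr1, by omega⟩, hrank, hlt⟩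
    have hQbelow := (h4 A B hA hB).mp hPbelow
    rw [gtSel_iff_beat] at hQbelow
    obtain ⟨e, hE', hL', r1, ⟨hr1, hr1i⟩, hrank, hlt⟩ := hQbelow
    have hei : e < i := by omega
    rw [gtSel_iff_beat]
    refine ⟨e, ?_, ?_, r1, Or.inl hr1, hrank, hlt⟩
    · rintro r2 (hr2 | hr2) hk
      · exact hE' r2 ⟨hr2, by omega⟩ hk
      · exact absurd (hS r2 hr2).1 (by omega)
    · rintro r2 (hr2 | hr2) hk
      · exact hL' r2 ⟨hr2, by omega⟩ hk
      · exact absurd (hS r2 hr2).1 (by omega)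
  · -- Case i ≤ d
    by_cases hSP : StrictAt P.sel d A B
    · -- P itself is strict at rank d
      have hBP : Beat P.sel d A B := ⟨hEP, hLP, hSP⟩
      have hdP : diff P A B = (d : ℕ∞) := beat_diff hBP
      have hgQ : gtSel Q.sel A B := (h2 A B hA hB).mp (gtSel_iff_beat.mpr ⟨d, hBP⟩)
      rw [gtSel_iff_beat] at hgQ
      obtain ⟨e, hEQ, hLQ, hSQ⟩ := hgQ
      have hdQ : diff Q A B = (e : ℕ∞) := beat_diff ⟨hEQ, hLQ, hSQ⟩
      have hei : i ≤ e := by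
        by_contra hc
        push_neg at hc
        have hQb : gtSel (Q.below i).sel A B := by
          rw [gtSel_iff_beat]
          obtain ⟨r1, hr1, hrank, hlt⟩ := hSQ
          exact ⟨e, fun r2 hr2 hk => hEQ r2 hr2.1 hk,
            fun r2 hr2 hk => hLQ r2 hr2.1 hk, r1, ⟨hr1, by omega⟩, hrank, hlt⟩
        have hPb := (h4 A B hA hB).mpr hQb
        rw [gtSel_iff_beat] at hPb
        obtain ⟨e', hE', hL', r1, ⟨hr1, hr1i⟩, hrank, hlt⟩ := hPb
        exact hlt.ne (hEP r1 hr1 (by omega))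
      by_cases hed : e = d
      · subst hed
        rw [gtSel_iff_beat]
        refine ⟨e, eqBelow_union.mpr ⟨hEQ, hES⟩, ?_, ?_⟩
        · rintro r2 (hr2 | hr2)
          · exact hLQ r2 hr2
          · exact hLS r2 hr2
        · obtain ⟨r1, hr1, hrank, hlt⟩ := hSQ
          exact ⟨r1, Or.inl hr1, hrank, hlt⟩
      · -- d ≠ e : condition (3) forces j < both diffs, so S is silent
        have h3' := h3 A B hA hB
        rw [hdP, hdQ] at h3'
        have hiOr : (i : ℕ∞) < (d : ℕ∞) ∨ (i : ℕ∞) < (e : ℕ∞) := by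
          rcases lt_or_eq_of_le hd with h1 | h1
          · exact Or.inl (by exact_mod_cast h1)
          · exact Or.inr (by exact_mod_cast (by omega : i < e))
        rcases h3' hiOr with h1 | ⟨hjd, hje⟩
        · exact absurd (by exact_mod_cast h1 : d = e) (fun hh => hed hh.symm)
        · -- all rules of S are silent : rank ≤ j < d
          have hSall : ∀ r ∈ S, degree A r = degree B r := by
            intro r hr
            refine hES r hr ?_
            have := (hS r hr).2
            have hrd : (r.rank : ℕ∞) < (d : ℕ∞) := lt_of_le_of_lt this hjd
            exact_mod_cast hrd
          rw [gtSel_iff_beat]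
          refine ⟨e, eqBelow_union.mpr ⟨hEQ, fun r hr _ => hSall r hr⟩, ?_, ?_⟩
          · rintro r2 (hr2 | hr2) hk
            · exact hLQ r2 hr2 hk
            · exact le_of_eq (hSall r2 hr2)
          · obtain ⟨r1, hr1, hrank, hlt⟩ := hSQ
            exact ⟨r1, Or.inl hr1, hrank, hlt⟩
    · -- P not strict at rank d, so the strict rule is in S and P is flat up to d+1
      have hSS : StrictAt S d A B := by
        obtain ⟨r1, hr1, hrank, hlt⟩ := hStr
        rcases hr1 with h1 | h1
        · exact absurd ⟨r1, h1, hrank, hlt⟩ hSP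
        · exact ⟨r1, h1, hrank, hlt⟩
      have hEP1 : EqBelow P.sel (d + 1) A B := by
        intro r hr hk
        rcases lt_or_eq_of_le (Nat.lt_succ_iff.mp hk) with h1 | h1
        · exact hEP r hr h1
        · refine le_antisymm (hLP r hr h1) ?_
          by_contra hc
          push_neg at hc
          rcases lt_or_eq_of_le (hLP r hr h1) with h2 | h2
          · exact hSP ⟨r, hr, h1, h2⟩
          · omega
      have hd1le : ((d + 1 : ℕ) : ℕ∞) ≤ diff P A B :=
        (le_diff_iff (d + 1)).mpr hEP1
      have hidP : (i : ℕ∞) < diff P A B :=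
        lt_of_lt_of_le (by exact_mod_cast (by omega : i < d + 1)) hd1le
      obtain ⟨r1, hr1, hrank, hlt⟩ := hSS
      have hdj : (d : ℕ∞) ≤ j := hrank ▸ (hS r1 hr1).2
      have hdQ1 : (d : ℕ∞) < diff Q A B := by
        rcases h3 A B hA hB (Or.inl hidP) with h1 | ⟨-, hjQ⟩
        · rw [← h1]
          exact lt_of_lt_of_le (by exact_mod_cast Nat.lt_succ_self d) hd1le
        · exact lt_of_le_of_lt hdj hjQ
      have hEQ1 : EqBelow Q.sel (d + 1) A B := (lt_diff_iff d).mp hdQ1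
      rw [gtSel_iff_beat]
      refine ⟨d, eqBelow_union.mpr ⟨hEQ1.mono (by omega), hES⟩, ?_, ?_⟩
      · rintro r2 (hr2 | hr2) hk
        · exact le_of_eq (hEQ1 r2 hr2 (by omega))
        · exact hLS r2 hr2 hk
      · exact ⟨r1, Or.inr hr1, hrank, hlt⟩

end Stmt11Aux5
/-- Theorem 11, CO case: characterization of combined strong equivalence
`P ≡^{s,[i,j]}_g Q` for ranked CO problems. -/
theorem stmt11 {U : Type} [Countable U] (P Q : OptProblem U)
    (i : ℕ) (j : ℕ∞) (hi : 1 ≤ i) (hij : (i : ℕ∞) ≤ j) :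
    sgeqv Sem.co i j P Q ↔
      (models P.gen = models Q.gen ∧
       restrictRel (gtSel P.sel) (models P.gen) =
         restrictRel (gtSel Q.sel) (models Q.gen) ∧
       (∀ I ∈ models P.gen, ∀ J ∈ models P.gen,
         ((i : ℕ∞) < diff P I J ∨ (i : ℕ∞) < diff Q I J) →
           (diff P I J = diff Q I J ∨ (j < diff P I J ∧ j < diff Q I J))) ∧
       restrictRel (gtSel (P.below i).sel) (models P.gen) =
         restrictRel (gtSel (Q.below i).sel) (models Q.gen)) := by
  constructor
  · -- forward direction
    intro h
    have hM : models P.gen = models Q.gen := models_eq_of_sgeqv h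
    have mPQ : ∀ {X : Set U}, X ∈ models P.gen → X ∈ models Q.gen := fun hX => hM ▸ hX
    have mQP : ∀ {X : Set U}, X ∈ models Q.gen → X ∈ models P.gen := fun hX => hM.symm ▸ hX
    refine ⟨hM, ?_, ?_, ?_⟩
    · funext A B
      apply propext
      constructor
      · rintro ⟨hg, hA, hB⟩
        exact ⟨(gtSel_iff_of_sgeqv h hM hA hB).mp hg, mPQ hA, mPQ hB⟩
      · rintro ⟨hg, hA, hB⟩
        exact ⟨(gtSel_iff_of_sgeqv h hM (mQP hA) (mQP hB)).mpr hg, mQP hA, mQP hB⟩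
    · intro A hA B hB hiOr
      by_contra hc
      push_neg at hc
      obtain ⟨hne, hj⟩ := hc
      rcases lt_or_gt_of_ne hne with hlt | hlt
      · have hfin : diff P A B ≠ ⊤ := (lt_of_lt_of_le hlt le_top).ne
        obtain ⟨d, hdeq⟩ := WithTop.ne_top_iff_exists.mp hfin
        have hdP : diff P A B = (d : ℕ∞) := hdeq.symm
        have hdj : diff P A B ≤ j := by
          by_contra hcc
          push_neg at hcc
          exact lt_asymm hlt ((hj hcc).trans_lt hcc)
        rw [hdP] at hlt hdj
        exact diff_contra_of_sgeqv h hM hi hij hA hB hdP hlt hdj hiOr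
      · have hfin : diff Q A B ≠ ⊤ := (lt_of_lt_of_le hlt le_top).ne
        obtain ⟨d, hdeq⟩ := WithTop.ne_top_iff_exists.mp hfin
        have hdQ : diff Q A B = (d : ℕ∞) := hdeq.symm
        have hdj : diff Q A B ≤ j := by
          by_contra hcc
          push_neg at hcc
          exact absurd (hj (hcc.trans hlt)) (not_le.mpr hcc)
        rw [hdQ] at hlt hdj
        exact diff_contra_of_sgeqv (sgeqv_symm h) hM.symm hi hij (mPQ hA) (mPQ hB)
          hdQ hlt hdj (Or.symm hiOr)
    · funext A B
      apply propext
      constructor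
      · rintro ⟨hg, hA, hB⟩
        exact ⟨(gtSel_below_iff_of_sgeqv h hM hi hij hA hB).mp hg, mPQ hA, mPQ hB⟩
      · rintro ⟨hg, hA, hB⟩
        exact ⟨(gtSel_below_iff_of_sgeqv h hM hi hij (mQP hA) (mQP hB)).mpr hg,
          mQP hA, mQP hB⟩
  · -- backward direction
    rintro ⟨hM, hc2, hc3, hc4⟩
    have mPQ : ∀ {X : Set U}, X ∈ models P.gen → X ∈ models Q.gen := fun hX => hM ▸ hX
    have mQP : ∀ {X : Set U}, X ∈ models Q.gen → X ∈ models P.gen := fun hX => hM.symm ▸ hX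
    have h2 : ∀ A B : Set U, A ∈ models P.gen → B ∈ models P.gen →
        (gtSel P.sel A B ↔ gtSel Q.sel A B) := by
      intro A B hA hB
      have hAB := congrFun (congrFun hc2 A) B
      constructor
      · intro hg
        exact (Eq.mp hAB ⟨hg, hA, hB⟩).1
      · intro hg
        exact (Eq.mpr hAB ⟨hg, mPQ hA, mPQ hB⟩).1
    have h4 : ∀ A B : Set U, A ∈ models P.gen → B ∈ models P.gen →
        (gtSel (P.below i).sel A B ↔ gtSel (Q.below i).sel A B) := by
      intro A B hA hB
      have hAB := congrFun (congrFun hc4 A) B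
      constructor
      · intro hg
        exact (Eq.mp hAB ⟨hg, hA, hB⟩).1
      · intro hg
        exact (Eq.mpr hAB ⟨hg, mPQ hA, mPQ hB⟩).1
    have h3 : ∀ A B : Set U, A ∈ models P.gen → B ∈ models P.gen →
        ((i : ℕ∞) < diff P A B ∨ (i : ℕ∞) < diff Q A B) →
        (diff P A B = diff Q A B ∨ (j < diff P A B ∧ j < diff Q A B)) :=
      fun A B hA hB => hc3 A hA B hB
    -- swapped versions
    have h2' : ∀ A B : Set U, A ∈ models Q.gen → B ∈ models Q.gen →
        (gtSel Q.sel A B ↔ gtSel P.sel A B) :=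
      fun A B hA hB => (h2 A B (mQP hA) (mQP hB)).symm
    have h4' : ∀ A B : Set U, A ∈ models Q.gen → B ∈ models Q.gen →
        (gtSel (Q.below i).sel A B ↔ gtSel (P.below i).sel A B) :=
      fun A B hA hB => (h4 A B (mQP hA) (mQP hB)).symm
    have h3' : ∀ A B : Set U, A ∈ models Q.gen → B ∈ models Q.gen →
        ((i : ℕ∞) < diff Q A B ∨ (i : ℕ∞) < diff P A B) →
        (diff Q A B = diff P A B ∨ (j < diff Q A B ∧ j < diff P A B)) := by
      intro A B hA hB hOr
      rcases h3 A B (mQP hA) (mQP hB) (Or.symm hOr) with h1 | ⟨ha, hb⟩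
      · exact Or.inl h1.symm
      · exact Or.inr ⟨hb, ha⟩
    intro R hR
    ext I
    rw [mem_pref_union, mem_pref_union]
    constructor
    · rintro ⟨⟨hIP, hIR⟩, hno⟩
      refine ⟨⟨mPQ hIP, hIR⟩, ?_⟩
      rintro ⟨J, ⟨hJQ, hJR⟩, hgt⟩
      exact hno ⟨J, ⟨mQP hJQ, hJR⟩,
        gtSel_union_transfer hi hij h2' h3' h4' hR hJQ (mPQ hIP) hgt⟩
    · rintro ⟨⟨hIQ, hIR⟩, hno⟩
      refine ⟨⟨mQP hIQ, hIR⟩, ?_⟩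
      rintro ⟨J, ⟨hJP, hJR⟩, hgt⟩
      exact hno ⟨J, ⟨mPQ hJP, hJR⟩,
        gtSel_union_transfer hi hij h2 h3 h4 hR hJP (mQP hIQ) hgt⟩
end

section
/- For all CO problems P and Q, P ≡^s_g Q if and only if P ≡^s Q. -/
open scoped Classical

variable {U : Type}

/-!
A generator context `R` can be traded for a selector context. Let `I` be preferred in `P ∪ R`.
By compactness of `U → Bool` there are finitely many `ψ ∈ Rᵍ` such that no model of `Pᵍ` beats
`I` once the rank-1 rules `ψ > ⊤ ← ⊤` are added to `Pˢ ∪ Rˢ`: a beater in every finite stage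
would give a model of all of `Pᵍ ∪ Rᵍ` beating `I`. So `I` is preferred in `P ∪ R'` for the
selector-only context `R'` consisting of `Rˢ` and these rules, hence in `Q ∪ R'` by `P ≡ˢ Q`.
Models of `Rᵍ` and `I` take the same value on the added rules, so `I` is preferred in `Q ∪ R`.
-/

lemma satTheory_union {K : Set U} {T T' : Set (Formula U)} :
    SatTheory K (T ∪ T') ↔ SatTheory K T ∧ SatTheory K T' :=
  ⟨fun h => ⟨fun φ hφ => h φ (Or.inl hφ), fun φ hφ => h φ (Or.inr hφ)⟩,
    fun h φ hφ => hφ.elim (h.1 φ) (h.2 φ)⟩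

lemma mem_pref_co {P : OptProblem U} {I : Set U} :
    I ∈ pref Sem.co P ↔ SatTheory I P.gen ∧ ∀ K, SatTheory K P.gen → ¬ gtSel P.sel K I := by
  simp [pref, outcomes, models]

def Rule.formulas (r : Rule U) : Set (Formula U) := insert r.body {φ | φ ∈ r.head}

lemma degree_congr {K K' : Set U} {r : Rule U} (h : ∀ φ ∈ r.formulas, Sat K φ ↔ Sat K' φ) :
    degree K r = degree K' r := by
  have hb := h _ (Set.mem_insert _ _)
  have hh : ∀ φ ∈ r.head, Sat K φ ↔ Sat K' φ := fun φ hφ => h φ (Set.mem_insert_of_mem _ hφ)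
  have hk : ∀ k, Sat K (r.head.get k) ↔ Sat K' (r.head.get k) := fun k => hh _ (List.get_mem _ k)
  have he : (∃ φ ∈ r.head, Sat K φ) ↔ ∃ φ ∈ r.head, Sat K' φ :=
    exists_congr fun φ => and_congr_right (hh φ)
  simp only [degree, hb, hk, he]

def Formula.top : Formula U := .imp .bot .bot

def blockerRule (ψ : Formula U) : Rule U := ⟨[ψ, Formula.top], Formula.top, 1, by simp, le_rfl⟩

lemma degree_blockerRule (K : Set U) (ψ : Formula U) :
    degree K (blockerRule ψ) = if Sat K ψ then 1 else 2 := by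
  have htop : Sat K (Formula.top : Formula U) := id
  by_cases hψ : Sat K ψ <;> simp [degree, blockerRule, htop, hψ, Fin.exists_fin_two, Set.ofPred_or]

lemma gtSel_congr_left {G : Set (Rule U)} {K K' I : Set U}
    (h : ∀ r ∈ G, degree K r = degree K' r) (hK : gtSel G K I) : gtSel G K' I := by
  obtain ⟨r', hr', hlt, hle, heq⟩ := hK
  exact ⟨r', hr', h r' hr' ▸ hlt, fun r hr hrk => h r hr ▸ hle r hr hrk,
    fun r hr hrk => h r hr ▸ heq r hr hrk⟩

lemma gtSel_union_of_degree_eq {G B : Set (Rule U)} {K I : Set U}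
    (hB : ∀ b ∈ B, degree K b = degree I b) (h : gtSel G K I) : gtSel (G ∪ B) K I := by
  obtain ⟨r', hr', hlt, hle, heq⟩ := h
  refine ⟨r', Or.inl hr', hlt, ?_, ?_⟩
  · rintro r (hr | hr) hrk
    · exact hle r hr hrk
    · exact (hB r hr).le
  · rintro r (hr | hr) hrk
    · exact heq r hr hrk
    · exact hB r hr

lemma gtSel_of_gtSel_union_blockerRule {G : Set (Rule U)} {F : Set (Formula U)} {K I : Set U}
    (hI : ∀ ψ ∈ F, Sat I ψ) (h : gtSel (G ∪ blockerRule '' F) K I) :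
    gtSel G K I ∧ ∀ ψ ∈ F, Sat K ψ := by
  obtain ⟨r', hr', hlt, hle, heq⟩ := h
  have hdegI : ∀ ψ ∈ F, degree I (blockerRule ψ) = 1 := fun ψ hψ => by
    rw [degree_blockerRule, if_pos (hI ψ hψ)]
  have hr'G : r' ∈ G := by
    rcases hr' with hr' | ⟨ψ, hψ, rfl⟩
    · exact hr'
    · exact absurd hlt (by rw [hdegI ψ hψ, degree_blockerRule]; split_ifs <;> omega)
  -- blocker rules have the least rank `1`, so they are compared either at the rank of `r'`
  -- (degree of `K` at most that of `I`) or below it (equal degrees)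
  have hdegK : ∀ ψ ∈ F, degree K (blockerRule ψ) ≤ 1 := fun ψ hψ => by
    have hmem : blockerRule ψ ∈ G ∪ blockerRule '' F := Or.inr ⟨ψ, hψ, rfl⟩
    rcases r'.rank_pos.eq_or_lt with h1 | h1
    · exact hdegI ψ hψ ▸ hle _ hmem h1
    · exact (heq _ hmem h1).trans_le (hdegI ψ hψ).le
  refine ⟨⟨r', hr'G, hlt, fun r hr => hle r (Or.inl hr), fun r hr => heq r (Or.inl hr)⟩,
    fun ψ hψ => ?_⟩
  have hKψ := hdegK ψ hψ
  rw [degree_blockerRule] at hKψ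
  by_contra hK
  rw [if_neg hK] at hKψ
  omega

/-- Interpretations as points of the compact space `U → Bool`. -/
def valuationSet (f : U → Bool) : Set U := {a | f a = true}

lemma valuationSet_decide_mem (K : Set U) : valuationSet (fun a => decide (a ∈ K)) = K := by
  ext a; simp [valuationSet]

lemma isClopen_setOf_sat (φ : Formula U) : IsClopen {f : U → Bool | Sat (valuationSet f) φ} := by
  induction φ with
  | atom a => exact (isClopen_discrete {true}).preimage (continuous_apply a)
  | bot => exact isClopen_empty
  | conj φ ψ ihφ ihψ => exact ihφ.inter ihψ
  | disj φ ψ ihφ ihψ => exact ihφ.union ihψ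
  | imp φ ψ ihφ ihψ =>
    convert ihφ.compl.union ihψ using 1
    ext f
    exact imp_iff_not_or

lemma isClosed_setOf_gtSel {G : Set (Rule U)} (hG : G.Finite) (I : Set U) :
    IsClosed {f : U → Bool | gtSel G (valuationSet f) I} := by
  set W := {f : U → Bool | gtSel G (valuationSet f) I}
  -- `W` is pulled back from the finite discrete space of truth assignments to the formulas of `G`
  let L := ⋃ r ∈ G, r.formulas
  have : Finite L := (hG.biUnion fun r _ => (List.finite_toSet r.head).insert r.body).to_subtype
  let ρ : (U → Bool) → L → Bool := fun f φ => {g | Sat (valuationSet g) φ.1}.boolIndicator f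
  have hρ : Continuous ρ := continuous_pi fun φ =>
    (continuous_boolIndicator_iff_isClopen _).2 (isClopen_setOf_sat φ.1)
  have hW : ρ ⁻¹' (ρ '' W) = W := by
    refine (Set.subset_preimage_image ρ W).antisymm' ?_
    rintro f ⟨f₀, hf₀, hρf⟩
    refine gtSel_congr_left (fun r hr => degree_congr fun φ hφ => ?_) hf₀
    have := congrFun hρf ⟨φ, Set.mem_biUnion hr hφ⟩
    simp only [ρ, Set.boolIndicator] at this
    split_ifs at this <;> simp_all
  exact hW ▸ (isClosed_discrete (ρ '' W)).preimage hρ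

lemma exists_sat_gtSel_of_forall_finite {Θ : Set (Formula U)} {G : Set (Rule U)} (hG : G.Finite)
    {I : Set U} (h : ∀ F ⊆ Θ, F.Finite → ∃ K, SatTheory K F ∧ gtSel G K I) :
    ∃ K, SatTheory K Θ ∧ gtSel G K I := by
  have hfinite : ∀ u : Finset Θ, ({f : U → Bool | gtSel G (valuationSet f) I} ∩
      ⋂ θ ∈ u, {f : U → Bool | Sat (valuationSet f) θ.1}).Nonempty := by
    intro u
    obtain ⟨K, hKu, hKI⟩ := h (Subtype.val '' (u : Set Θ)) (by rintro _ ⟨θ, -, rfl⟩; exact θ.2)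
      (u.finite_toSet.image _)
    refine ⟨fun a => decide (a ∈ K), ?_, Set.mem_iInter₂.2 fun θ hθ => ?_⟩
    · show gtSel G (valuationSet _) I
      rwa [valuationSet_decide_mem]
    · show Sat (valuationSet _) θ.1
      rw [valuationSet_decide_mem]
      exact hKu θ.1 ⟨θ, hθ, rfl⟩
  obtain ⟨f, hfG, hfΘ⟩ := (isClosed_setOf_gtSel hG I).isCompact.inter_iInter_nonempty
    (fun θ : Θ => {f : U → Bool | Sat (valuationSet f) θ.1})
    (fun θ => (isClopen_setOf_sat θ.1).isClosed) hfinite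
  exact ⟨valuationSet f, fun θ hθ => Set.mem_iInter.1 hfΘ ⟨θ, hθ⟩, hfG⟩

def OptProblem.blockerContext (R : OptProblem U) {F : Set (Formula U)} (hF : F.Finite) :
    OptProblem U :=
  ⟨∅, R.sel ∪ blockerRule '' F, R.sel_finite.union (hF.image _)⟩

lemma exists_mem_pref_union_blockerContext {P R : OptProblem U} {I : Set U}
    (hI : I ∈ pref Sem.co (P.union R)) :
    ∃ F ⊆ R.gen, ∃ hF : F.Finite, I ∈ pref Sem.co (P.union (R.blockerContext hF)) := by
  obtain ⟨hIgen, hIopt⟩ := mem_pref_co.1 hI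
  obtain ⟨hIP, hIR⟩ := satTheory_union.1 hIgen
  by_contra! hbeaten
  have hfinite : ∀ E ⊆ P.gen ∪ R.gen, E.Finite →
      ∃ K, SatTheory K E ∧ gtSel (P.sel ∪ R.sel) K I := by
    intro E hE hE_fin
    have hF := hbeaten (E ∩ R.gen) Set.inter_subset_right (hE_fin.inter_of_left _)
    simp only [mem_pref_co, OptProblem.union, OptProblem.blockerContext, Set.union_empty, not_and,
      not_forall, not_not] at hF
    obtain ⟨K, hKP, hKI⟩ := hF hIP
    rw [← Set.union_assoc] at hKI
    obtain ⟨hKI, hKF⟩ := gtSel_of_gtSel_union_blockerRule (fun ψ hψ => hIR ψ hψ.2) hKI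
    refine ⟨K, fun θ hθ => ?_, hKI⟩
    rcases hE hθ with hθP | hθR
    · exact hKP θ hθP
    · exact hKF θ ⟨hθ, hθR⟩
  obtain ⟨K, hK, hKI⟩ := exists_sat_gtSel_of_forall_finite (P.sel_finite.union R.sel_finite) hfinite
  exact hIopt K hK hKI

lemma mem_pref_union_of_mem_pref_union_blockerContext {Q R : OptProblem U} {F : Set (Formula U)}
    (hF : F.Finite) (hFR : F ⊆ R.gen) {I : Set U} (hIR : SatTheory I R.gen)
    (hI : I ∈ pref Sem.co (Q.union (R.blockerContext hF))) : I ∈ pref Sem.co (Q.union R) := by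
  simp only [mem_pref_co, OptProblem.union, OptProblem.blockerContext, Set.union_empty] at hI ⊢
  obtain ⟨hIQ, hIopt⟩ := hI
  refine ⟨satTheory_union.2 ⟨hIQ, hIR⟩, fun K hK hKI => ?_⟩
  obtain ⟨hKQ, hKR⟩ := satTheory_union.1 hK
  refine hIopt K hKQ (Set.union_assoc _ _ _ ▸ gtSel_union_of_degree_eq ?_ hKI)
  rintro _ ⟨ψ, hψ, rfl⟩
  rw [degree_blockerRule, degree_blockerRule, if_pos (hKR ψ (hFR hψ)), if_pos (hIR ψ (hFR hψ))]

lemma pref_union_subset_of_seqv {P Q : OptProblem U} (h : seqv Sem.co 1 ⊤ P Q)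
    (R : OptProblem U) : pref Sem.co (P.union R) ⊆ pref Sem.co (Q.union R) := by
  intro I hI
  have hIR := (satTheory_union.1 (mem_pref_co.1 hI).1).2
  obtain ⟨F, hFR, hF, hIF⟩ := exists_mem_pref_union_blockerContext hI
  refine mem_pref_union_of_mem_pref_union_blockerContext hF hFR hIR ?_
  rwa [← h _ rfl fun r _ => ⟨r.rank_pos, le_top⟩]

theorem stmt13_general {U : Type} (P Q : OptProblem U) :
    sgeqv Sem.co 1 ⊤ P Q ↔ seqv Sem.co 1 ⊤ P Q :=
  ⟨fun h R _ hR => h R hR, fun h R _ => (pref_union_subset_of_seqv h R).antisymm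
    (pref_union_subset_of_seqv (fun R' hgen hR' => (h R' hgen hR').symm) R)⟩

/-- Theorem 12: for CO problems, `P ≡^s_g Q` iff `P ≡^s Q`. -/
theorem stmt13 {U : Type} [Countable U] (P Q : OptProblem U) :
    sgeqv Sem.co 1 ⊤ P Q ↔ seqv Sem.co 1 ⊤ P Q :=
  stmt13_general P Q
end

section
/- For all simple CO problems P and Q, the four properties P ≡^s_g Q, P ≡^{s,=1}_g Q, P ≡^{s,=1} Q and P ≡^s Q are equivalent. -/
open scoped Classical

variable {U : Type}

/-!
A model `I` of `P` is preferred in `P ∪ {pin I > ¬pin I}`, where `pin I` fixes `I` on the atoms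
of the selector of `P`; so rank-one contexts already force `P` and `Q` to have the same models.
For simple selectors the strict preference is strict Pareto dominance of the degree vectors, so
it remains to see that Pareto dominance of `I` over `J` for `P` implies it for `Q`. Otherwise some
rule of `Q` rates `J` better than `I`, and `I`, `J` differ at one of its atoms `a`; the context
made of "be a copy of `I` or of `J` on the atoms of `Q`" and "agree with `I` at `a`" then keeps
`J` preferred for `Q`, while `I` beats `J` for `P`. With equal models and equal Pareto relations,
a context of any generator and any ranks acts on `P` and `Q` alike.
-/

namespace Formula

noncomputable def atoms : Formula U → Finset U
  | atom a => {a}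
  | bot => ∅
  | conj φ ψ | disj φ ψ | imp φ ψ => atoms φ ∪ atoms ψ

theorem sat_congr {I J : Set U} {φ : Formula U} (h : ∀ a ∈ φ.atoms, (a ∈ I ↔ a ∈ J)) :
    Sat I φ ↔ Sat J φ := by
  induction φ <;> simp_all [Sat, atoms]

def top_s14 : Formula U := imp bot bot

def neg (φ : Formula U) : Formula U := imp φ bot

def conjList : List (Formula U) → Formula U
  | [] => top_s14
  | φ :: l => conj φ (conjList l)

@[simp] theorem sat_top (I : Set U) : Sat I (top_s14 : Formula U) := fun h => h

@[simp] theorem sat_neg {I : Set U} {φ : Formula U} : Sat I (neg φ) ↔ ¬ Sat I φ := Iff.rfl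

@[simp] theorem sat_conjList {I : Set U} {l : List (Formula U)} :
    Sat I (conjList l) ↔ ∀ φ ∈ l, Sat I φ := by
  induction l <;> simp_all [conjList, Sat]

noncomputable def literal (I : Set U) (a : U) : Formula U :=
  if a ∈ I then atom a else neg (atom a)

@[simp] theorem sat_literal {K I : Set U} {a : U} : Sat K (literal I a) ↔ (a ∈ K ↔ a ∈ I) := by
  unfold literal
  split_ifs <;> simp_all [Sat]

noncomputable def pin (I : Set U) (A : Finset U) : Formula U :=
  conjList (A.toList.map (literal I))

@[simp] theorem sat_pin {K I : Set U} {A : Finset U} :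
    Sat K (pin I A) ↔ ∀ a ∈ A, (a ∈ K ↔ a ∈ I) := by
  simp [pin]

end Formula

open Formula

namespace Rule

noncomputable def atoms (r : Rule U) : Finset U :=
  r.body.atoms ∪ r.head.toFinset.biUnion Formula.atoms

theorem degree_congr {I J : Set U} {r : Rule U} (h : ∀ a ∈ r.atoms, (a ∈ I ↔ a ∈ J)) :
    degree I r = degree J r := by
  have hbody : Sat I r.body ↔ Sat J r.body :=
    sat_congr fun a ha => h a (Finset.mem_union_left _ ha)
  have hhead : ∀ φ ∈ r.head, (Sat I φ ↔ Sat J φ) := fun φ hφ => sat_congr fun a ha =>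
    h a (Finset.mem_union_right _ (Finset.mem_biUnion.mpr ⟨φ, List.mem_toFinset.mpr hφ, ha⟩))
  have hget : ∀ k, Sat I (r.head.get k) ↔ Sat J (r.head.get k) :=
    fun k => hhead _ (List.get_mem _ _)
  have hsome : (∃ φ ∈ r.head, Sat I φ) ↔ ∃ φ ∈ r.head, Sat J φ :=
    exists_congr fun φ => and_congr_right fun hφ => hhead φ hφ
  simp only [degree, hbody, hget, hsome]

def indicator (φ : Formula U) : Rule U :=
  ⟨[φ, neg φ], top_s14, 1, by simp, le_rfl⟩

@[simp] theorem rank_indicator (φ : Formula U) : (indicator φ).rank = 1 := rfl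

theorem degree_indicator (K : Set U) (φ : Formula U) :
    degree K (indicator φ) = if Sat K φ then 1 else 2 := by
  by_cases h : Sat K φ <;> simp [degree, indicator, Fin.exists_fin_two, h]

end Rule

open Rule

theorem gtSel.not_simSel {S : Set (Rule U)} {I J : Set U} (h : gtSel S I J) : ¬ simSel S I J :=
  fun hsim => by
    obtain ⟨r', hr', hlt, -⟩ := h
    exact hlt.ne (hsim r' hr')

/-- Rank-one rules are never outranked, so a strict preference never worsens them. -/
theorem gtSel.degree_le_of_rank_eq_one {S : Set (Rule U)} {I J : Set U} (h : gtSel S I J)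
    {r : Rule U} (hr : r ∈ S) (hrank : r.rank = 1) : degree I r ≤ degree J r := by
  obtain ⟨r', -, -, hle, heq⟩ := h
  rcases (hrank ▸ r'.rank_pos : r.rank ≤ r'.rank).eq_or_lt with h | h
  · exact hle r hr h
  · exact (heq r hr h).le

/-- Weak Pareto dominance of `I` over `J` (smaller degrees are better). -/
def ParetoLE (S : Set (Rule U)) (I J : Set U) : Prop :=
  ∀ r ∈ S, degree I r ≤ degree J r

theorem gtSel_union_of_paretoLE_iff {S₁ S₂ S : Set (Rule U)}
    (hS₁ : ∀ r ∈ S₁, r.rank = 1) (hS₂ : ∀ r ∈ S₂, r.rank = 1) {I J : Set U}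
    (hIJ : ParetoLE S₁ I J ↔ ParetoLE S₂ I J) (hJI : ParetoLE S₁ J I ↔ ParetoLE S₂ J I)
    (h : gtSel (S₁ ∪ S) I J) : gtSel (S₂ ∪ S) I J := by
  obtain ⟨r', hr', hlt, hle, heq⟩ := h
  rcases hr' with hr'₁ | hr'S
  · have hpar : ParetoLE S₁ I J := fun r hr => hle r (.inl hr) (by rw [hS₁ r hr, hS₁ r' hr'₁])
    have hnpar : ¬ ParetoLE S₂ J I := fun hpar' => (hJI.mpr hpar' r' hr'₁).not_gt hlt
    obtain ⟨q, hq, hqlt⟩ : ∃ q ∈ S₂, degree I q < degree J q := by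
      simpa [ParetoLE] using hnpar
    refine ⟨q, .inl hq, hqlt, ?_, fun r _ hr => absurd (hS₂ q hq ▸ hr) r.rank_pos.not_gt⟩
    rintro r (hr | hr) hrank
    · exact hIJ.mp hpar r hr
    · exact hle r (.inr hr) (by rw [hrank, hS₂ q hq, hS₁ r' hr'₁])
  · refine ⟨r', .inr hr'S, hlt, ?_, ?_⟩
    · rintro r (hr | hr) hrank
      · refine hIJ.mp (fun p hp => hle p (.inl hp) ?_) r hr
        rw [hS₁ p hp, ← hrank, hS₂ r hr]
      · exact hle r (.inr hr) hrank
    · rintro r (hr | hr) hrank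
      · have hsim : ∀ p ∈ S₁, degree I p = degree J p := fun p hp =>
          heq p (.inl hp) (by rw [hS₁ p hp, ← hS₂ r hr]; exact hrank)
        exact le_antisymm (hIJ.mp (fun p hp => (hsim p hp).le) r hr)
          (hJI.mp (fun p hp => (hsim p hp).ge) r hr)
      · exact heq r (.inr hr) hrank

theorem gtSel_union_congr {S₁ S₂ S : Set (Rule U)}
    (hS₁ : ∀ r ∈ S₁, r.rank = 1) (hS₂ : ∀ r ∈ S₂, r.rank = 1) {I J : Set U}
    (hIJ : ParetoLE S₁ I J ↔ ParetoLE S₂ I J) (hJI : ParetoLE S₁ J I ↔ ParetoLE S₂ J I) :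
    gtSel (S₁ ∪ S) I J ↔ gtSel (S₂ ∪ S) I J :=
  ⟨gtSel_union_of_paretoLE_iff hS₁ hS₂ hIJ hJI,
    gtSel_union_of_paretoLE_iff hS₂ hS₁ hIJ.symm hJI.symm⟩

namespace OptProblem

noncomputable def selAtoms (P : OptProblem U) : Finset U :=
  P.sel_finite.toFinset.biUnion Rule.atoms

theorem atoms_subset_selAtoms {P : OptProblem U} {r : Rule U} (hr : r ∈ P.sel) :
    r.atoms ⊆ P.selAtoms :=
  Finset.subset_biUnion_of_mem _ (P.sel_finite.mem_toFinset.mpr hr)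

def ofRules (l : List (Rule U)) : OptProblem U :=
  ⟨∅, {r | r ∈ l}, l.finite_toSet⟩

theorem inRankInterval_ofRules {l : List (Rule U)} (hl : ∀ r ∈ l, r.rank = 1) :
    inRankInterval 1 (1 : ℕ∞) (ofRules l).sel :=
  fun r hr => by simp [hl r hr]

@[simp] theorem mem_ofRules_sel {l : List (Rule U)} {r : Rule U} : r ∈ (ofRules l).sel ↔ r ∈ l :=
  Iff.rfl

@[simp] theorem outcomes_co_union (P R : OptProblem U) :
    outcomes Sem.co (P.union R) = models P.gen ∩ models R.gen := by
  ext I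
  simp [outcomes, union, models, SatTheory, or_imp, forall_and]

@[simp] theorem models_ofRules (l : List (Rule U)) : models (ofRules l).gen = Set.univ := by
  simp [ofRules, models, SatTheory]

end OptProblem

open OptProblem

theorem inRankInterval.mono {i i' : ℕ} {j j' : ℕ∞} {S : Set (Rule U)} (hi : i ≤ i')
    (hj : j' ≤ j) (hS : inRankInterval i' j' S) : inRankInterval i j S :=
  fun r hr => ⟨hi.trans (hS r hr).1, (hS r hr).2.trans hj⟩

theorem sgeqv.mono {sem : Sem} {i i' : ℕ} {j j' : ℕ∞} {P Q : OptProblem U} (hi : i ≤ i')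
    (hj : j' ≤ j) (h : sgeqv sem i j P Q) : sgeqv sem i' j' P Q :=
  fun R hR => h R (hR.mono hi hj)

theorem seqv.mono {sem : Sem} {i i' : ℕ} {j j' : ℕ∞} {P Q : OptProblem U} (hi : i ≤ i')
    (hj : j' ≤ j) (h : seqv sem i j P Q) : seqv sem i' j' P Q :=
  fun R hR hRs => h R hR (hRs.mono hi hj)

theorem sgeqv.seqv {sem : Sem} {i : ℕ} {j : ℕ∞} {P Q : OptProblem U} (h : sgeqv sem i j P Q) :
    seqv sem i j P Q :=
  fun R _ hRs => h R hRs

theorem pref_co_union_congr {P Q R : OptProblem U} (hmod : models P.gen = models Q.gen)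
    (hgt : ∀ I ∈ models P.gen, ∀ J ∈ models P.gen,
      gtSel (P.sel ∪ R.sel) I J ↔ gtSel (Q.sel ∪ R.sel) I J) :
    pref Sem.co (P.union R) = pref Sem.co (Q.union R) := by
  ext I
  simp only [pref, outcomes_co_union, ← hmod, Set.mem_ofPred_eq, Set.mem_inter_iff]
  exact and_congr_right fun hI => not_congr <| exists_congr fun J =>
    and_congr_right fun hJ => hgt J hJ.1 I hI.1

theorem models_subset_of_seqv {P Q : OptProblem U} (hs : seqv Sem.co 1 (1 : ℕ∞) P Q) :
    models P.gen ⊆ models Q.gen := by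
  intro I hI
  set s := indicator (pin I P.selAtoms)
  have hpref : I ∈ pref Sem.co (P.union (ofRules [s])) := by
    refine ⟨by simpa using hI, fun ⟨K, _, hKI⟩ => hKI.not_simSel ?_⟩
    have hKs := hKI.degree_le_of_rank_eq_one (.inr (List.mem_singleton_self s)) rfl
    have hKpin : Sat K (pin I P.selAtoms) := by
      by_contra h
      simp [s, degree_indicator, h] at hKs
    rintro r (hr | hr)
    · exact degree_congr fun a ha => sat_pin.mp hKpin a (atoms_subset_selAtoms hr ha)
    · obtain rfl : r = s := List.mem_singleton.mp hr
      simp [s, degree_indicator, hKpin]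
  rw [hs _ rfl (inRankInterval_ofRules (by simp [s]))] at hpref
  simpa using hpref.1

theorem paretoLE_of_seqv {P Q : OptProblem U} (hQ : ∀ r ∈ Q.sel, r.rank = 1)
    (hs : seqv Sem.co 1 (1 : ℕ∞) P Q) {I J : Set U} (hI : I ∈ models P.gen)
    (hJ : J ∈ models Q.gen) (hIJ : ParetoLE P.sel I J) : ParetoLE Q.sel I J := by
  by_contra hn
  obtain ⟨q, hq, hJq⟩ : ∃ q ∈ Q.sel, degree J q < degree I q := by simpa [ParetoLE] using hn
  obtain ⟨a, haq, ha⟩ : ∃ a ∈ q.atoms, ¬ (a ∈ I ↔ a ∈ J) := by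
    by_contra! h
    exact hJq.ne' (degree_congr h)
  set A := Q.selAtoms
  have haA : a ∈ A := atoms_subset_selAtoms hq haq
  -- `s` confines the competitors of `J` to copies of `I` or `J` on `A`; `t` separates `I` from `J`.
  set s := indicator (.disj (pin I A) (pin J A))
  set t := indicator (pin I {a})
  have hJs : degree J s = 1 := by simp [s, degree_indicator, Sat]
  have hIs : degree I s = 1 := by simp [s, degree_indicator, Sat]
  have hIt : degree I t = 1 := by simp [t, degree_indicator]
  have hJt : degree J t = 2 := by simp [t, degree_indicator, ha, Iff.comm]
  have hJpref : J ∈ pref Sem.co (Q.union (ofRules [s, t])) := by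
    refine ⟨by simpa using hJ, fun ⟨K, _, hKJ⟩ => ?_⟩
    have hKs := hKJ.degree_le_of_rank_eq_one (r := s) (.inr (by simp)) rfl
    have hKA : Sat K (.disj (pin I A) (pin J A)) := by
      by_contra h
      rw [hJs] at hKs
      simp [s, degree_indicator, h] at hKs
    rcases hKA with hKI | hKJ'
    · have hKq := hKJ.degree_le_of_rank_eq_one (.inl hq) (hQ q hq)
      rw [degree_congr fun b hb => sat_pin.mp hKI b (atoms_subset_selAtoms hq hb)] at hKq
      exact hKq.not_gt hJq
    · refine hKJ.not_simSel ?_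
      rintro r (hr | hr)
      · exact degree_congr fun b hb => sat_pin.mp hKJ' b (atoms_subset_selAtoms hr hb)
      · have hKa := sat_pin.mp hKJ' a haA
        rcases List.mem_pair.mp hr with rfl | rfl
        · simp [s, degree_indicator, Sat, hKJ']
        · simp [t, degree_indicator, hKa]
  rw [← hs _ rfl (inRankInterval_ofRules (by simp [s, t]))] at hJpref
  refine hJpref.2 ⟨I, by simpa using hI, t, .inr (by simp), by omega, ?_, ?_⟩
  · rintro r (hr | hr) -
    · exact hIJ r hr
    · rcases List.mem_pair.mp hr with rfl | rfl <;> omega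
  · exact fun r _ hr => absurd (rank_indicator _ ▸ hr) r.rank_pos.not_gt

theorem sgeqv_of_seqv_of_rank_eq_one {P Q : OptProblem U}
    (hP : ∀ r ∈ P.sel, r.rank = 1) (hQ : ∀ r ∈ Q.sel, r.rank = 1)
    (hs : seqv Sem.co 1 (1 : ℕ∞) P Q) : sgeqv Sem.co 1 ⊤ P Q := by
  have hs' : seqv Sem.co 1 (1 : ℕ∞) Q P := fun R hR hRs => (hs R hR hRs).symm
  have hmod : models P.gen = models Q.gen :=
    (models_subset_of_seqv hs).antisymm (models_subset_of_seqv hs')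
  have hpar : ∀ I ∈ models P.gen, ∀ J ∈ models P.gen,
      ParetoLE P.sel I J ↔ ParetoLE Q.sel I J := fun I hI J hJ =>
    ⟨paretoLE_of_seqv hQ hs hI (hmod ▸ hJ), paretoLE_of_seqv hP hs' (hmod ▸ hI) hJ⟩
  exact fun R _ => pref_co_union_congr hmod fun I hI J hJ =>
    gtSel_union_congr hP hQ (hpar I hI J hJ) (hpar J hJ I hI)

theorem stmt14_general {U : Type} (P Q : OptProblem U)
    (hP : ∀ r ∈ P.sel, r.rank = 1) (hQ : ∀ r ∈ Q.sel, r.rank = 1) :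
    (sgeqv Sem.co 1 ⊤ P Q ↔ sgeqv Sem.co 1 (1 : ℕ∞) P Q) ∧
    (sgeqv Sem.co 1 ⊤ P Q ↔ seqv Sem.co 1 (1 : ℕ∞) P Q) ∧
    (sgeqv Sem.co 1 ⊤ P Q ↔ seqv Sem.co 1 ⊤ P Q) := by
  have hard := sgeqv_of_seqv_of_rank_eq_one hP hQ
  have restrict : sgeqv Sem.co 1 ⊤ P Q → sgeqv Sem.co 1 (1 : ℕ∞) P Q := .mono le_rfl le_top
  exact ⟨⟨restrict, fun h => hard h.seqv⟩, ⟨fun h => (restrict h).seqv, hard⟩,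
    ⟨sgeqv.seqv, fun h => hard (h.mono le_rfl le_top)⟩⟩

/-- Corollary 13: for simple CO problems, `P ≡^s_g Q`, `P ≡^{s,=1}_g Q`,
`P ≡^{s,=1} Q` and `P ≡^s Q` are all equivalent. -/
theorem stmt14 {U : Type} [Countable U] (P Q : OptProblem U)
    (hP : ∀ r ∈ P.sel, r.rank = 1) (hQ : ∀ r ∈ Q.sel, r.rank = 1) :
    (sgeqv Sem.co 1 ⊤ P Q ↔ sgeqv Sem.co 1 (1 : ℕ∞) P Q) ∧
    (sgeqv Sem.co 1 ⊤ P Q ↔ seqv Sem.co 1 (1 : ℕ∞) P Q) ∧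
    (sgeqv Sem.co 1 ⊤ P Q ↔ seqv Sem.co 1 ⊤ P Q) :=
  stmt14_general P Q hP hQ
end
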